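/- Let X be a locally compact, σ-compact Hausdorff topological space and let V be a finite-dimensional real normed vector space. Equip the set C(X,V) of continuous maps X → V with the Whitney (C⁰-fine) topology, namely the topology generated by the sets W_U := { g ∈ C(X,V) : (x, g(x)) ∈ U for all x ∈ X }, where U ranges over the open subsets of X × V. Then two maps f, g ∈ C(X,V) lie in the same path-connected component of C(X,V) if and only if the support of f − g (the closure of { x ∈ X : f(x) ≠ g(x) }) is compact. -/
import Mathlib

open Set TopologicalSpace Filter Topology

/-- The range of a sequence of points in `X × V` whose first coordinates escape a
compact exhaustion of `X` is closed. -/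
lemma isClosed_range_escape {X : Type*} [TopologicalSpace X] [T2Space X]
    {V : Type*} [TopologicalSpace V] [T2Space V]
    (K : CompactExhaustion X) (x : ℕ → X) (v : ℕ → V)
    (hx : ∀ k, x k ∉ K k) :
    IsClosed (Set.range fun k => (x k, v k)) := by
  rw [← isOpen_compl_iff, isOpen_iff_forall_mem_open]
  rintro ⟨a, b⟩ hab
  set n := K.find a + 1 with hn
  have haW : a ∈ interior (K n) := K.subset_interior_succ _ (K.mem_find a)
  set F : Set (X × V) := (fun k => (x k, v k)) '' (Set.Iio n) with hF
  have hFfin : F.Finite := (Set.finite_Iio n).image _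
  refine ⟨(interior (K n) ×ˢ (univ : Set V)) ∩ Fᶜ, ?_, ?_, ?_⟩
  · rintro ⟨c, d⟩ ⟨⟨hc, -⟩, hcd⟩ ⟨k, hk⟩
    rcases lt_or_ge k n with h | h
    · exact hcd ⟨k, h, hk⟩
    · apply hx k
      apply K.subset h
      have h1 : x k = c := congrArg Prod.fst hk
      rw [h1]
      exact interior_subset hc
  · exact (isOpen_interior.prod isOpen_univ).inter hFfin.isClosed.isOpen_compl
  · exact ⟨⟨haW, mem_univ _⟩, fun hmem => hab (image_subset_range _ _ hmem)⟩

/-- Local compact-support property of continuous paths (from a metric space) into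
`C(X,V)` with the Whitney topology. -/
lemma whitney_loc_compact {X : Type*} [TopologicalSpace X] [LocallyCompactSpace X]
    [SigmaCompactSpace X] [T2Space X]
    {V : Type*} [TopologicalSpace V] [T2Space V]
    {Y : Type*} [MetricSpace Y]
    (τ : TopologicalSpace C(X, V))
    (hτ : τ = TopologicalSpace.generateFrom
      {S : Set C(X, V) | ∃ U : Set (X × V), IsOpen U ∧
        S = {g : C(X, V) | ∀ x : X, (x, g x) ∈ U}})
    (p : Y → C(X, V)) (hp : @Continuous Y C(X, V) _ τ p) (t₀ : Y) :
    ∃ ε > 0, ∀ s, dist s t₀ < ε → IsCompact (closure {x | p s x ≠ p t₀ x}) := by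
  subst hτ
  letI : TopologicalSpace C(X, V) := TopologicalSpace.generateFrom
      {S : Set C(X, V) | ∃ U : Set (X × V), IsOpen U ∧
        S = {g : C(X, V) | ∀ x : X, (x, g x) ∈ U}}
  by_contra h
  push_neg at h
  have hsk : ∀ k : ℕ, ∃ s : Y, dist s t₀ < 1 / (k + 1) ∧
      ¬ IsCompact (closure {x | p s x ≠ p t₀ x}) := fun k => h _ (by positivity)
  choose s hs hnc using hsk
  set K := CompactExhaustion.choice X with hK
  have hxk : ∀ k : ℕ, ∃ x, p (s k) x ≠ p t₀ x ∧ x ∉ K k := by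
    intro k
    by_contra hcon
    push_neg at hcon
    exact hnc k ((K.isCompact k).of_isClosed_subset isClosed_closure
      (closure_minimal (fun y hy => hcon y hy) (K.isCompact k).isClosed))
  choose x hx hxK using hxk
  have hS : IsClosed (Set.range fun k => (x k, p (s k) (x k))) :=
    isClosed_range_escape K x _ hxK
  set S := Set.range fun k => (x k, p (s k) (x k)) with hSdef
  have hW : IsOpen {g : C(X, V) | ∀ y : X, (y, g y) ∈ Sᶜ} :=
    TopologicalSpace.GenerateOpen.basic _ ⟨Sᶜ, hS.isOpen_compl, rfl⟩
  have hmem : p t₀ ∈ {g : C(X, V) | ∀ y : X, (y, g y) ∈ Sᶜ} := by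
    rintro y ⟨k, hk⟩
    have h1 : x k = y := congrArg Prod.fst hk
    have h2 : p (s k) (x k) = p t₀ y := congrArg Prod.snd hk
    subst h1
    exact hx k h2
  have hst : Tendsto s atTop (𝓝 t₀) := by
    rw [tendsto_iff_dist_tendsto_zero]
    exact squeeze_zero (fun k => dist_nonneg) (fun k => (hs k).le)
      tendsto_one_div_add_atTop_nhds_zero_nat
  have hev : ∀ᶠ k in atTop, p (s k) ∈ {g : C(X, V) | ∀ y : X, (y, g y) ∈ Sᶜ} :=
    ((hp.tendsto t₀).comp hst).eventually (hW.eventually_mem hmem)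
  obtain ⟨k, hk⟩ := hev.exists
  exact hk (x k) ⟨k, rfl⟩

/-- Path-connected components of `C(X,V)` in the Whitney (`C⁰`-fine) topology:
two continuous maps `f g : X → V` are joined by a path in the Whitney topology
if and only if the support of their difference (the closure of the set where
they differ) is compact. -/
theorem joined_whitney_iff_isCompact_support
    {X : Type*} [TopologicalSpace X] [LocallyCompactSpace X]
    [SigmaCompactSpace X] [T2Space X]
    {V : Type*} [NormedAddCommGroup V] [NormedSpace ℝ V] [FiniteDimensional ℝ V]
    (τ : TopologicalSpace C(X, V))
    (hτ : τ = TopologicalSpace.generateFrom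
      {S : Set C(X, V) | ∃ U : Set (X × V), IsOpen U ∧
        S = {g : C(X, V) | ∀ x : X, (x, g x) ∈ U}})
    (f g : C(X, V)) :
    @Joined C(X, V) τ f g ↔ IsCompact (closure {x : X | f x ≠ g x}) := by
  letI := τ
  constructor
  · rintro ⟨p⟩
    have hloc : ∀ t₀ : unitInterval, ∃ ε > 0, ∀ s, dist s t₀ < ε →
        IsCompact (closure {x | p s x ≠ p t₀ x}) :=
      fun t₀ => whitney_loc_compact τ hτ (fun t => p t) p.continuous t₀
    set A : Set unitInterval := {t | IsCompact (closure {x | p t x ≠ f x})} with hA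
    have hclopen : IsClopen A := by
      constructor
      · rw [← closure_subset_iff_isClosed]
        intro t₀ ht₀
        obtain ⟨ε, hε, h⟩ := hloc t₀
        obtain ⟨sx, hsA, hd⟩ := Metric.mem_closure_iff.mp ht₀ ε hε
        have h1 : IsCompact (closure {x | p sx x ≠ p t₀ x}) := h sx (by rwa [dist_comm])
        refine IsCompact.of_isClosed_subset (h1.union hsA) isClosed_closure
          (closure_minimal ?_ (isClosed_closure.union isClosed_closure))
        intro y hy
        by_cases h2 : p sx y = p t₀ y
        · exact Or.inr (subset_closure (fun he => hy (h2.symm.trans he)))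
        · exact Or.inl (subset_closure h2)
      · rw [Metric.isOpen_iff]
        intro t₀ ht₀
        obtain ⟨ε, hε, h⟩ := hloc t₀
        refine ⟨ε, hε, fun sx hsx => ?_⟩
        have h1 : IsCompact (closure {x | p sx x ≠ p t₀ x}) := h sx (Metric.mem_ball.mp hsx)
        refine IsCompact.of_isClosed_subset (h1.union ht₀) isClosed_closure
          (closure_minimal ?_ (isClosed_closure.union isClosed_closure))
        intro y hy
        by_cases h2 : p sx y = p t₀ y
        · exact Or.inr (subset_closure (fun he => hy (h2.trans he)))
        · exact Or.inl (subset_closure h2)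
    have h0 : (0 : unitInterval) ∈ A := by
      show IsCompact (closure {x : X | p 0 x ≠ f x})
      have he : {x : X | p 0 x ≠ f x} = ∅ := by
        ext y; simp [p.source]
      rw [he, closure_empty]
      exact isCompact_empty
    haveI : PreconnectedSpace unitInterval := Subtype.preconnectedSpace isPreconnected_Icc
    have hA_univ : A = univ := hclopen.eq_univ ⟨0, h0⟩
    have h1 : (1 : unitInterval) ∈ A := hA_univ ▸ mem_univ _
    have key : IsCompact (closure {x : X | p 1 x ≠ f x}) := h1
    have heq : {x : X | f x ≠ g x} = {x : X | p 1 x ≠ f x} := by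
      ext y
      simp only [mem_setOf_eq, p.target]
      exact ne_comm
    rw [heq]
    exact key
  · intro hc
    set q : ℝ → C(X, V) := fun t =>
      ⟨fun x => f x + t • (g x - f x),
        f.continuous.add ((g.continuous.sub f.continuous).const_smul t)⟩ with hq
    have hqc : @Continuous ℝ C(X, V) _ τ q := by
      rw [hτ, continuous_generateFrom_iff]
      rintro S ⟨U, hU, rfl⟩
      rw [isOpen_iff_mem_nhds]
      intro t₀ ht₀
      set φ : ℝ × X → X × V := fun z => (z.2, f z.2 + z.1 • (g z.2 - f z.2)) with hφ
      have hφc : Continuous φ := by fun_prop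
      have hsub : ({t₀} : Set ℝ) ×ˢ closure {x | f x ≠ g x} ⊆ φ ⁻¹' U := by
        rintro ⟨t, y⟩ ⟨ht, hy⟩
        simp only [mem_singleton_iff] at ht
        subst ht
        exact ht₀ y
      obtain ⟨u, w, hu, hw, htu, hKw, huw⟩ :=
        generalized_tube_lemma isCompact_singleton hc (hU.preimage hφc) hsub
      refine mem_nhds_iff.mpr ⟨u, ?_, hu, htu rfl⟩
      intro t ht y
      show (y, f y + t • (g y - f y)) ∈ U
      by_cases hy : y ∈ closure {x | f x ≠ g x}
      · exact huw (show (t, y) ∈ u ×ˢ w from ⟨ht, hKw hy⟩)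
      · have hfg : f y = g y := by
          by_contra hne
          exact hy (subset_closure hne)
        have e1 : f y + t • (g y - f y) = f y + t₀ • (g y - f y) := by
          rw [hfg]; simp
        rw [e1]
        exact ht₀ y
    refine ⟨⟨⟨fun t : unitInterval => q t, hqc.comp continuous_subtype_val⟩, ?_, ?_⟩⟩
    · ext y
      show f y + ((0 : unitInterval) : ℝ) • (g y - f y) = f y
      simp
    · ext y
      show f y + ((1 : unitInterval) : ℝ) • (g y - f y) = g y
      simp
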